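/- arXiv:1104.0291 — 7 statements merged into one kernel-verified Lean document; each statement's English description precedes it below -/
import Mathlib

section
/- In a Petri net, if every connected component of the reaction graph is strongly connected (weak reversibility), then for any marking m0 that enables every transition, the reachability graph of (N, m0) is strongly connected; in particular m0 is a home marking and the net is live. -/
/-- A transition `t` is enabled at marking `m`. -/
def enabledAt {P T : Type*} (Wm : P → T → ℕ) (m : P → ℕ) (t : T) : Prop :=
  ∀ p, Wm p t ≤ m p

/-- Firing transition `t` at marking `m`. -/
def fireAt {P T : Type*} (Wm Wp : P → T → ℕ) (m : P → ℕ) (t : T) : P → ℕ :=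
  fun p => m p - Wm p t + Wp p t

/-- One step of the reachability graph. -/
def step {P T : Type*} (Wm Wp : P → T → ℕ) (m m' : P → ℕ) : Prop :=
  ∃ t, enabledAt Wm m t ∧ m' = fireAt Wm Wp m t

/-- Reachability relation. -/
def reach {P T : Type*} (Wm Wp : P → T → ℕ) : (P → ℕ) → (P → ℕ) → Prop :=
  Relation.ReflTransGen (step Wm Wp)

/-- Input bag of a transition. -/
def preBag {P T : Type*} (Wm : P → T → ℕ) (t : T) : P → ℕ := fun p => Wm p t

/-- Output bag of a transition. -/
def postBag {P T : Type*} (Wp : P → T → ℕ) (t : T) : P → ℕ := fun p => Wp p t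

/-- `c` is a complex of the net. -/
def isComplex {P T : Type*} (Wm Wp : P → T → ℕ) (c : P → ℕ) : Prop :=
  (∃ t, c = preBag Wm t) ∨ (∃ t, c = postBag Wp t)

/-- Arc of the reaction graph. -/
def rarc {P T : Type*} (Wm Wp : P → T → ℕ) (c c' : P → ℕ) : Prop :=
  ∃ t, c = preBag Wm t ∧ c' = postBag Wp t

/-- Weak reversibility: every connected component of the reaction graph is
strongly connected. -/
def weaklyReversible {P T : Type*} (Wm Wp : P → T → ℕ) : Prop :=
  ∀ c c' : P → ℕ, isComplex Wm Wp c → isComplex Wm Wp c' →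
    Relation.ReflTransGen (fun a b => rarc Wm Wp a b ∨ rarc Wm Wp b a) c c' →
    Relation.ReflTransGen (rarc Wm Wp) c c'

/-!
Firing `t` at `m` replaces the input bag of `t` by its output bag on top of the
untouched rest `m - W⁻(·,t)`. Weak reversibility gives a path in the reaction graph
from the output bag back to the input bag, and every arc of that path is a transition
enabled on top of the same rest. So each firing can be undone, reachability is
symmetric, and the reachable markings form one strongly connected class containing
`m0`, at which every transition is enabled.
-/

section

variable {P T : Type*} (Wm Wp : P → T → ℕ)

theorem reach_add_of_reflTransGen_rarc (b : P → ℕ) {c c' : P → ℕ}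
    (h : Relation.ReflTransGen (rarc Wm Wp) c c') :
    reach Wm Wp (b + c) (b + c') := by
  induction h with
  | refl => exact .refl
  | tail _ harc ih =>
    obtain ⟨t, rfl, rfl⟩ := harc
    refine ih.tail ⟨t, fun p => Nat.le_add_left _ _, ?_⟩
    funext p
    simp [fireAt, preBag, postBag]

theorem reflTransGen_rarc_postBag_preBag (hWR : weaklyReversible Wm Wp) (t : T) :
    Relation.ReflTransGen (rarc Wm Wp) (postBag Wp t) (preBag Wm t) :=
  hWR _ _ (.inr ⟨t, rfl⟩) (.inl ⟨t, rfl⟩) (.single (.inr ⟨t, rfl, rfl⟩))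

theorem reach_of_step (hWR : weaklyReversible Wm Wp) {m m' : P → ℕ}
    (h : step Wm Wp m m') : reach Wm Wp m' m := by
  obtain ⟨t, hen, rfl⟩ := h
  have hrest : m - preBag Wm t + preBag Wm t = m := tsub_add_cancel_of_le hen
  have h := reach_add_of_reflTransGen_rarc Wm Wp (m - preBag Wm t)
    (reflTransGen_rarc_postBag_preBag Wm Wp hWR t)
  rwa [hrest] at h

theorem reach_symm (hWR : weaklyReversible Wm Wp) {m m' : P → ℕ}
    (h : reach Wm Wp m m') : reach Wm Wp m' m := by
  induction h with
  | refl => exact .refl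
  | tail _ hst ih => exact (reach_of_step Wm Wp hWR hst).trans ih

end

theorem stmt0_general {P T : Type*}
    (Wm Wp : P → T → ℕ) (hWR : weaklyReversible Wm Wp)
    (m0 : P → ℕ) (henable : ∀ t, enabledAt Wm m0 t) :
    (∀ m m', reach Wm Wp m0 m → reach Wm Wp m0 m' → reach Wm Wp m m') ∧
    (∀ m, reach Wm Wp m0 m → reach Wm Wp m m0) ∧
    (∀ m, reach Wm Wp m0 m → ∀ t, ∃ m', reach Wm Wp m m' ∧ enabledAt Wm m' t) := by
  have hback : ∀ m, reach Wm Wp m0 m → reach Wm Wp m m0 := fun _ h => reach_symm Wm Wp hWR h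
  exact ⟨fun m _ h h' => (hback m h).trans h', hback, fun m h t => ⟨m0, hback m h, henable t⟩⟩

/-- If the net is weakly reversible and `m0` enables every transition, then the
reachability graph of `(N, m0)` is strongly connected; in particular `m0` is a
home marking and the net is live. -/
theorem stmt0 {P T : Type*} [Fintype P] [Fintype T]
    (Wm Wp : P → T → ℕ) (hWR : weaklyReversible Wm Wp)
    (m0 : P → ℕ) (henable : ∀ t, enabledAt Wm m0 t) :
    (∀ m m', reach Wm Wp m0 m → reach Wm Wp m0 m' → reach Wm Wp m m') ∧
    (∀ m, reach Wm Wp m0 m → reach Wm Wp m m0) ∧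
    (∀ m, reach Wm Wp m0 m → ∀ t, ∃ m', reach Wm Wp m m' ∧ enabledAt Wm m' t) :=
  stmt0_general Wm Wp hWR m0 henable
end

section
/- A connected marked graph has deficiency 0 or 1. (That is, if N is a connected Petri net in which every place has exactly one input transition and one output transition, then |C| − ℓ − rank(W) ∈ {0, 1}, where C is the set of complexes, ℓ the number of connected components of the reaction graph, and W = W⁺ − W⁻ the incidence matrix.) -/
/-- The finite set of complexes of the net. -/
def complexes {P T : Type*} [Fintype P] [Fintype T] [DecidableEq P]
    (Wm Wp : P → T → ℕ) : Finset (P → ℕ) :=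
  (Finset.univ.image (preBag Wm)) ∪ (Finset.univ.image (postBag Wp))

/-- The (undirected) reaction graph on the set of complexes. -/
def reactionGraph {P T : Type*} [Fintype P] [Fintype T] [DecidableEq P]
    (Wm Wp : P → T → ℕ) : SimpleGraph {c // c ∈ complexes Wm Wp} :=
  SimpleGraph.fromRel (fun a b => rarc Wm Wp a.1 b.1)

/-- The incidence matrix `W = W⁺ − W⁻` with rational entries. -/
def incidence {P T : Type*} (Wm Wp : P → T → ℕ) : Matrix P T ℚ :=
  Matrix.of fun p t => (Wp p t : ℚ) - (Wm p t : ℚ)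

/-- The deficiency `|C| − ℓ − rank W`, as an integer. -/
noncomputable def deficiency {P T : Type*} [Fintype P] [Fintype T] [DecidableEq P]
    (Wm Wp : P → T → ℕ) : ℤ :=
  (Nat.card {c // c ∈ complexes Wm Wp} : ℤ)
    - (Nat.card (reactionGraph Wm Wp).ConnectedComponent : ℤ)
    - ((incidence Wm Wp).rank : ℤ)

/-- Adjacency of the bipartite net graph on places and transitions. -/
def netAdj {P T : Type*} (Wm Wp : P → T → ℕ) : (P ⊕ T) → (P ⊕ T) → Prop
  | Sum.inl p, Sum.inr t => Wm p t ≠ 0 ∨ Wp p t ≠ 0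
  | Sum.inr t, Sum.inl p => Wm p t ≠ 0 ∨ Wp p t ≠ 0
  | _, _ => False

/-- Connectedness of the Petri net. -/
def netConnected {P T : Type*} (Wm Wp : P → T → ℕ) : Prop :=
  ∀ x y : P ⊕ T, Relation.ReflTransGen (netAdj Wm Wp) x y

/-- Marked graph: all arc weights are at most 1 and every place has exactly one
input transition and exactly one output transition. -/
def isMarkedGraph {P T : Type*} (Wm Wp : P → T → ℕ) : Prop :=
  (∀ p t, Wm p t ≤ 1) ∧ (∀ p t, Wp p t ≤ 1) ∧
  (∀ p, ∃! t, Wm p t ≠ 0) ∧ (∀ p, ∃! t, Wp p t ≠ 0)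

/-! Write `W = Y * I` where `I` is the incidence matrix of the reaction graph (column `t` is
`e (post t) - e (pre t)`) and `Y` has the complexes as columns. The kernel of `Iᵀ` consists of the
functions constant on the connected components of the reaction graph, so `rank I = |C| - ℓ` and
the deficiency is `rank I - rank W`, which lies between `0` and `|T| - rank W`. In a connected
marked graph every T-semiflow is constant, hence `rank W ≥ |T| - 1`. -/

open Module Matrix

theorem Relation.ReflTransGen.eq_of_forall_rel {α β : Type*} {r : α → α → Prop} {f : α → β}
    (hf : ∀ a b, r a b → f a = f b) {a b : α} (h : Relation.ReflTransGen r a b) : f a = f b := by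
  induction h with
  | refl => rfl
  | tail _ hr ih => exact ih.trans (hf _ _ hr)

/-- The kernel is the space of functions constant on components, i.e. of pullbacks along
`G.connectedComponentMk`. -/
theorem SimpleGraph.finrank_ker_eq_card_connectedComponent {V : Type*} [Finite V]
    (G : SimpleGraph V) {K M : Type*} [Field K] [AddCommGroup M] [Module K M]
    (L : (V → K) →ₗ[K] M) (hL : ∀ f, L f = 0 ↔ ∀ v w, G.Adj v w → f v = f w) :
    finrank K (LinearMap.ker L) = Nat.card G.ConnectedComponent := by
  have := Fintype.ofFinite G.ConnectedComponent
  have hker :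
      LinearMap.ker L = LinearMap.range (LinearMap.funLeft K K G.connectedComponentMk) := by
    ext f
    rw [LinearMap.mem_ker, hL]
    constructor
    · intro hf
      exact ⟨fun C => C.lift f fun v w p _ =>
        ((reachable_iff_reflTransGen v w).mp p.reachable).eq_of_forall_rel hf, rfl⟩
    · rintro ⟨g, rfl⟩ v w hadj
      exact congrArg g (ConnectedComponent.connectedComponentMk_eq_of_adj hadj)
  rw [hker, LinearMap.finrank_range_of_inj
    (LinearMap.funLeft_injective_of_surjective K K G.connectedComponentMk Quot.mk_surjective),
    Module.finrank_fintype_fun_eq_card, Nat.card_eq_fintype_card]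

section ComplexIncidence

variable {P T : Type*} [Fintype P] [Fintype T] [DecidableEq P] (Wm Wp : P → T → ℕ)

local notation "𝒞" => {c // c ∈ complexes Wm Wp}

def preComplex (t : T) : 𝒞 :=
  ⟨preBag Wm t, Finset.mem_union_left _ (Finset.mem_image_of_mem _ (Finset.mem_univ t))⟩

def postComplex (t : T) : 𝒞 :=
  ⟨postBag Wp t, Finset.mem_union_right _ (Finset.mem_image_of_mem _ (Finset.mem_univ t))⟩

def complexIncidence : Matrix 𝒞 T ℚ :=
  Matrix.of fun c t =>
    (if c = postComplex Wm Wp t then 1 else 0) - (if c = preComplex Wm Wp t then 1 else 0)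

def complexMatrix : Matrix P 𝒞 ℚ :=
  Matrix.of fun p c => (c.1 p : ℚ)

theorem incidence_eq_complexMatrix_mul_complexIncidence :
    incidence Wm Wp = complexMatrix Wm Wp * complexIncidence Wm Wp := by
  ext p t
  simp only [incidence, complexMatrix, complexIncidence, mul_apply, of_apply, mul_sub, mul_ite,
    mul_one, mul_zero, Finset.sum_sub_distrib, Finset.sum_ite_eq', Finset.mem_univ, if_true]
  rfl

theorem complexIncidence_transpose_mulVec (f : 𝒞 → ℚ) (t : T) :
    ((complexIncidence Wm Wp)ᵀ *ᵥ f) t = f (postComplex Wm Wp t) - f (preComplex Wm Wp t) := by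
  simp [complexIncidence, mulVec, dotProduct, sub_mul, Finset.sum_sub_distrib]

theorem forall_reactionGraph_adj_iff {β : Type*} (f : 𝒞 → β) :
    (∀ c c', (reactionGraph Wm Wp).Adj c c' → f c = f c') ↔
      ∀ t, f (postComplex Wm Wp t) = f (preComplex Wm Wp t) := by
  constructor
  · intro hf t
    by_cases h : preComplex Wm Wp t = postComplex Wm Wp t
    · rw [h]
    · exact (hf _ _ ⟨h, Or.inl ⟨t, rfl, rfl⟩⟩).symm
  · rintro hf c c' ⟨-, ⟨t, hc, hc'⟩ | ⟨t, hc', hc⟩⟩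
    · obtain rfl : c = preComplex Wm Wp t := Subtype.ext hc
      obtain rfl : c' = postComplex Wm Wp t := Subtype.ext hc'
      exact (hf t).symm
    · obtain rfl : c = postComplex Wm Wp t := Subtype.ext hc
      obtain rfl : c' = preComplex Wm Wp t := Subtype.ext hc'
      exact hf t

theorem card_complexes_eq_rank_add_card_connectedComponent :
    Nat.card 𝒞 =
      (complexIncidence Wm Wp).rank + Nat.card (reactionGraph Wm Wp).ConnectedComponent := by
  have hker := (reactionGraph Wm Wp).finrank_ker_eq_card_connectedComponent
    (complexIncidence Wm Wp)ᵀ.mulVecLin fun f => by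
      rw [forall_reactionGraph_adj_iff]
      simp only [mulVecLin_apply, funext_iff, Pi.zero_apply, complexIncidence_transpose_mulVec,
        sub_eq_zero]
  rw [← rank_transpose, Matrix.rank, ← hker, LinearMap.finrank_range_add_finrank_ker,
    Module.finrank_fintype_fun_eq_card, Nat.card_eq_fintype_card]

theorem deficiency_eq_rank_complexIncidence_sub_rank_incidence :
    deficiency Wm Wp = (complexIncidence Wm Wp).rank - (incidence Wm Wp).rank := by
  rw [deficiency, card_complexes_eq_rank_add_card_connectedComponent]
  push_cast
  ring

end ComplexIncidence

theorem Pi.eq_single_of_existsUnique_ne_zero {ι : Type*} [DecidableEq ι] {w : ι → ℕ}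
    (hle : ∀ i, w i ≤ 1) (h : ∃! i, w i ≠ 0) : ∃ i, w = Pi.single i 1 := by
  obtain ⟨i, hi, huniq⟩ := h
  refine ⟨i, funext fun j => ?_⟩
  by_cases hj : j = i
  · subst hj
    have := hle j
    simp only [Pi.single_eq_same]
    omega
  · rw [Pi.single_eq_of_ne hj]
    by_contra hne
    exact hj (huniq j hne)

namespace isMarkedGraph

variable {P T : Type*} {Wm Wp : P → T → ℕ}

theorem exists_eq_single [DecidableEq T] (hmg : isMarkedGraph Wm Wp) :
    ∃ producer consumer : P → T,
      ∀ p, (fun t => Wp p t) = Pi.single (producer p) 1 ∧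
        (fun t => Wm p t) = Pi.single (consumer p) 1 := by
  obtain ⟨hm1, hp1, hmE, hpE⟩ := hmg
  choose producer hproducer using fun p => Pi.eq_single_of_existsUnique_ne_zero (hp1 p) (hpE p)
  choose consumer hconsumer using fun p => Pi.eq_single_of_existsUnique_ne_zero (hm1 p) (hmE p)
  exact ⟨producer, consumer, fun p => ⟨hproducer p, hconsumer p⟩⟩

/-- A T-semiflow of a connected marked graph is constant: each place forces equal values on its
producer and its consumer, and connectedness propagates this to all transitions. -/
theorem eq_of_mulVec_eq_zero [Fintype T] (hmg : isMarkedGraph Wm Wp) (hconn : netConnected Wm Wp)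
    {v : T → ℚ} (hv : incidence Wm Wp *ᵥ v = 0) (t t' : T) : v t = v t' := by
  classical
  obtain ⟨producer, consumer, hsingle⟩ := hmg.exists_eq_single
  have hWp p t : Wp p t = (Pi.single (producer p) 1 : T → ℕ) t := congrFun (hsingle p).1 t
  have hWm p t : Wm p t = (Pi.single (consumer p) 1 : T → ℕ) t := congrFun (hsingle p).2 t
  have hplace p : v (producer p) = v (consumer p) := by
    have := congrFun hv p
    simp only [mulVec, dotProduct, incidence, of_apply, hWp, hWm, sub_mul,
      Finset.sum_sub_distrib, Pi.zero_apply] at this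
    simpa [Pi.single_apply, sub_eq_zero] using this
  have hadj p t : netAdj Wm Wp (.inl p) (.inr t) → v (producer p) = v t := by
    rintro (h | h)
    · rw [hWm, Pi.single_apply] at h
      rw [hplace, (by simpa using h : t = consumer p)]
    · rw [hWp, Pi.single_apply] at h
      rw [(by simpa using h : t = producer p)]
  let g : P ⊕ T → ℚ := Sum.elim (v ∘ producer) v
  have hg : ∀ x y, netAdj Wm Wp x y → g x = g y := by
    rintro (p | t) (p' | t') h
    · exact h.elim
    · exact hadj p t' h
    · exact (hadj p' t h).symm
    · exact h.elim
  exact (hconn (.inr t) (.inr t')).eq_of_forall_rel hg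

theorem card_le_rank_incidence_add_one [Fintype T] (hmg : isMarkedGraph Wm Wp)
    (hconn : netConnected Wm Wp) :
    Fintype.card T ≤ (incidence Wm Wp).rank + 1 := by
  obtain hT | ⟨⟨t₀⟩⟩ := isEmpty_or_nonempty T
  · simp
  have hker : LinearMap.ker (incidence Wm Wp).mulVecLin ≤ Submodule.span ℚ {fun _ => 1} := by
    intro v hv
    rw [Submodule.mem_span_singleton]
    exact ⟨v t₀, funext fun t => by
      simp [hmg.eq_of_mulVec_eq_zero hconn (LinearMap.mem_ker.mp hv) t t₀]⟩
  have hker_finrank : finrank ℚ (LinearMap.ker (incidence Wm Wp).mulVecLin) ≤ 1 :=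
    (Submodule.finrank_mono hker).trans ((finrank_span_le_card _).trans (by simp))
  have := LinearMap.finrank_range_add_finrank_ker (incidence Wm Wp).mulVecLin
  rw [finrank_fintype_fun_eq_card] at this
  rw [Matrix.rank]
  omega

end isMarkedGraph

theorem stmt1_general {P T : Type*} [Fintype P] [Fintype T] [DecidableEq P]
    (Wm Wp : P → T → ℕ) (hmg : isMarkedGraph Wm Wp) (hconn : netConnected Wm Wp) :
    deficiency Wm Wp = 0 ∨ deficiency Wm Wp = 1 := by
  have hdef := deficiency_eq_rank_complexIncidence_sub_rank_incidence Wm Wp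
  have hfactor : (incidence Wm Wp).rank ≤ (complexIncidence Wm Wp).rank :=
    incidence_eq_complexMatrix_mul_complexIncidence Wm Wp ▸ rank_mul_le_right _ _
  have hwidth := (complexIncidence Wm Wp).rank_le_card_width
  have hsemiflow := hmg.card_le_rank_incidence_add_one hconn
  omega

/-- A connected marked graph has deficiency 0 or 1. -/
theorem stmt1 {P T : Type*} [Fintype P] [Fintype T] [DecidableEq P] [DecidableEq T]
    (Wm Wp : P → T → ℕ) (hmg : isMarkedGraph Wm Wp) (hconn : netConnected Wm Wp) :
    deficiency Wm Wp = 0 ∨ deficiency Wm Wp = 1 :=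
  stmt1_general Wm Wp hmg hconn
end

section
/- Let A be the incidence matrix of the reaction graph of a Petri net and suppose the reaction graph has a terminal strongly connected component C and a transition t0 with t0• ∈ C and •t0 ∉ C. Then for every nonnegative vector v ∈ ℚ^T with v(t0) > 0, one has Av ≠ 0; indeed ∑_{c ∈ C}(Av)(c) ≥ v(t0) > 0. -/
/-- Entry of the reaction-graph incidence matrix `A(c,t) = 1_{t•=c} − 1_{•t=c}`. -/
def Aentry {P T : Type*} [Fintype P] [DecidableEq P] (Wm Wp : P → T → ℕ) (c : P → ℕ) (t : T) : ℚ :=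
  (if postBag Wp t = c then 1 else 0) - (if preBag Wm t = c then 1 else 0)

section IncidenceSums

variable {P T : Type*} [Fintype P] [DecidableEq P] (Wm Wp : P → T → ℕ) (S : Finset (P → ℕ))

theorem sum_Aentry_eq (t : T) :
    ∑ c ∈ S, Aentry Wm Wp c t =
      (if postBag Wp t ∈ S then 1 else 0) - (if preBag Wm t ∈ S then 1 else 0) := by
  simp only [Aentry, Finset.sum_sub_distrib, Finset.sum_ite_eq]

theorem sum_Aentry_nonneg (hterm : ∀ t : T, preBag Wm t ∈ S → postBag Wp t ∈ S) (t : T) :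
    0 ≤ ∑ c ∈ S, Aentry Wm Wp c t := by
  rw [sum_Aentry_eq]
  by_cases hpre : preBag Wm t ∈ S
  · simp [hpre, hterm t hpre]
  · split_ifs <;> norm_num

theorem sum_Aentry_eq_one {t : T} (hin : postBag Wp t ∈ S) (hout : preBag Wm t ∉ S) :
    ∑ c ∈ S, Aentry Wm Wp c t = 1 := by
  simp [sum_Aentry_eq, hin, hout]

/-- Summing `A v` over a set of complexes with no arc leaving it counts, with weight `v`, the
transitions entering it; so it is at least the weight of any single entering transition. -/
theorem le_sum_sum_Aentry_mul [Fintype T] (hterm : ∀ t : T, preBag Wm t ∈ S → postBag Wp t ∈ S)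
    {t0 : T} (hin : postBag Wp t0 ∈ S) (hout : preBag Wm t0 ∉ S)
    {v : T → ℚ} (hv : ∀ t, 0 ≤ v t) :
    v t0 ≤ ∑ c ∈ S, ∑ t, Aentry Wm Wp c t * v t := by
  have hswap : ∑ c ∈ S, ∑ t, Aentry Wm Wp c t * v t = ∑ t, (∑ c ∈ S, Aentry Wm Wp c t) * v t := by
    rw [Finset.sum_comm]
    simp only [Finset.sum_mul]
  calc v t0 = (∑ c ∈ S, Aentry Wm Wp c t0) * v t0 := by rw [sum_Aentry_eq_one Wm Wp S hin hout, one_mul]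
    _ ≤ ∑ t, (∑ c ∈ S, Aentry Wm Wp c t) * v t :=
      Finset.single_le_sum (fun t _ => mul_nonneg (sum_Aentry_nonneg Wm Wp S hterm t) (hv t))
        (Finset.mem_univ t0)
    _ = _ := hswap.symm

end IncidenceSums

theorem stmt3_general {P T : Type*} [Fintype P] [Fintype T] [DecidableEq P]
    (Wm Wp : P → T → ℕ) (S : Finset (P → ℕ))
    (hsub : S ⊆ complexes Wm Wp)
    (hterm : ∀ t : T, preBag Wm t ∈ S → postBag Wp t ∈ S)
    (t0 : T) (hin : postBag Wp t0 ∈ S) (hout : preBag Wm t0 ∉ S)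
    (v : T → ℚ) (hv : ∀ t, 0 ≤ v t) (hv0 : 0 < v t0) :
    v t0 ≤ ∑ c ∈ S, ∑ t, Aentry Wm Wp c t * v t ∧
    ∃ c ∈ complexes Wm Wp, ∑ t, Aentry Wm Wp c t * v t ≠ 0 := by
  have hmain := le_sum_sum_Aentry_mul Wm Wp S hterm hin hout hv
  refine ⟨hmain, ?_⟩
  obtain ⟨c, hc, hne⟩ := Finset.exists_ne_zero_of_sum_ne_zero (hv0.trans_le hmain).ne'
  exact ⟨c, hsub hc, hne⟩

/-- If `S` is a terminal strongly connected component of the reaction graph and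
`t0` is a transition with `t0• ∈ S` and `•t0 ∉ S`, then for every nonnegative
`v` with `v t0 > 0` one has `∑_{c ∈ S} (A v)(c) ≥ v t0 > 0`; in particular
`A v ≠ 0`. -/
theorem stmt3 {P T : Type*} [Fintype P] [Fintype T] [DecidableEq P] [DecidableEq T]
    (Wm Wp : P → T → ℕ) (S : Finset (P → ℕ))
    (hsub : S ⊆ complexes Wm Wp)
    (hsc : ∀ c ∈ S, ∀ c' ∈ S, Relation.ReflTransGen (rarc Wm Wp) c c')
    (hterm : ∀ t : T, preBag Wm t ∈ S → postBag Wp t ∈ S)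
    (t0 : T) (hin : postBag Wp t0 ∈ S) (hout : preBag Wm t0 ∉ S)
    (v : T → ℚ) (hv : ∀ t, 0 ≤ v t) (hv0 : 0 < v t0) :
    v t0 ≤ ∑ c ∈ S, ∑ t, Aentry Wm Wp c t * v t ∧
    ∃ c ∈ complexes Wm Wp, ∑ t, Aentry Wm Wp c t * v t ≠ 0 :=
  stmt3_general Wm Wp S hsub hterm t0 hin hout v hv hv0
end

section
/- If a Petri net (N, m0) is live and bounded (hence admits a strictly positive T-semi-flow) and has deficiency zero, then it is weakly reversible. -/
/-- Deficiency zero, characterised by the existence of a witness for every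
complex, i.e. the factorisation `A = B W`. -/
def deficiencyZero {P T : Type*} [Fintype P] [Fintype T] [DecidableEq P]
    (Wm Wp : P → T → ℕ) : Prop :=
  ∀ c ∈ complexes Wm Wp, ∃ w : P → ℚ, ∀ t,
    ∑ p, w p * ((Wp p t : ℚ) - (Wm p t : ℚ)) = Aentry Wm Wp c t

/-!
A live and bounded net has a strictly positive T-invariant `x`: runs firing every transition can
be chained indefinitely, and since only finitely many markings are reachable, one of them repeats.
Deficiency zero writes each row of the reaction-graph incidence matrix `A` as a combination of the
rows of `W`, so `A x = 0`, i.e. `x` is a strictly positive circulation on the reaction graph. In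
such a graph no arc can enter the set of complexes reachable from a given one, since none leaves
it, so every connected component is strongly connected.
-/

open Finset Relation

theorem Set.Finite.exists_transGen_self {α : Type*} {r : α → α → Prop} {s : Set α}
    (hs : s.Finite) (hne : s.Nonempty) (hr : ∀ x ∈ s, ∃ y ∈ s, r x y) :
    ∃ x ∈ s, TransGen r x x := by
  obtain ⟨a, ha⟩ := hne
  choose! f hfs hfr using hr
  have hmem : ∀ n, f^[n] a ∈ s := fun n => by
    induction n with
    | zero => exact ha
    | succ n ih => rw [Function.iterate_succ_apply']; exact hfs _ ih
  have hchain : ∀ i j, i < j → TransGen r (f^[i] a) (f^[j] a) := by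
    intro i j hij
    induction j, hij using Nat.le_induction with
    | base => rw [Function.iterate_succ_apply']; exact .single (hfr _ (hmem i))
    | succ j _ ih => rw [Function.iterate_succ_apply']; exact ih.tail (hfr _ (hmem j))
  obtain ⟨i, j, hij, heq⟩ := hs.exists_lt_map_eq_of_forall_mem hmem
  exact ⟨f^[i] a, hmem i, heq ▸ hchain i j hij⟩

theorem Fintype.sum_list_map_count {α M : Type*} [Fintype α] [DecidableEq α] [AddCommMonoid M]
    (l : List α) (f : α → M) : (l.map f).sum = ∑ a, l.count a • f a := by
  rw [Finset.sum_list_map_count]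
  refine Finset.sum_subset (subset_univ _) fun a _ ha => ?_
  rw [List.count_eq_zero_of_not_mem (mt List.mem_toFinset.2 ha), zero_smul]

section Circulation

variable {α T K : Type*} [Fintype T] [DecidableEq α] [Ring K]

/-- Kirchhoff's law for the flow `v` on the multigraph with an arc `pre t ⟶ post t` for each
`t`. -/
def IsCirculation (pre post : T → α) (v : T → K) : Prop :=
  ∀ c ∈ univ.image pre ∪ univ.image post,
    ∑ t, ((if post t = c then 1 else 0) - (if pre t = c then 1 else 0)) * v t = 0

variable {pre post : T → α} {v : T → K}

theorem IsCirculation.sum_sub_mul_eq_zero (hv : IsCirculation pre post v) (f : α → K) :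
    ∑ t, (f (post t) - f (pre t)) * v t = 0 := by
  set V := univ.image pre ∪ univ.image post
  have hf : ∀ t, f (post t) - f (pre t)
      = ∑ c ∈ V, f c * ((if post t = c then 1 else 0) - (if pre t = c then 1 else 0)) := by
    intro t
    have hpost : post t ∈ V := mem_union_right _ (mem_image_of_mem _ (mem_univ t))
    have hpre : pre t ∈ V := mem_union_left _ (mem_image_of_mem _ (mem_univ t))
    simp only [mul_sub, mul_ite, mul_one, mul_zero, sum_sub_distrib, sum_ite_eq, hpost, hpre,
      if_true]
  simp only [hf, sum_mul, mul_assoc]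
  rw [sum_comm]
  simp only [← mul_sum]
  exact sum_eq_zero fun c hc => by rw [hv c hc, mul_zero]

theorem IsCirculation.pre_mem_of_post_mem [PartialOrder K] [IsOrderedRing K]
    (hv : IsCirculation pre post v)
    (hv_pos : ∀ t, 0 < v t) {S : Set α} (hS : ∀ t, pre t ∈ S → post t ∈ S) {t : T}
    (ht : post t ∈ S) : pre t ∈ S := by
  classical
  by_contra hpre
  -- no arc leaves `S`, so every term of the sum below is nonnegative
  let χ : α → K := fun c => if c ∈ S then 1 else 0
  have hnonneg : ∀ s ∈ univ, 0 ≤ (χ (post s) - χ (pre s)) * v s := by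
    intro s _
    by_cases hs : pre s ∈ S
    · simp [χ, hs, hS s hs]
    · by_cases hs' : post s ∈ S
      · simpa [χ, hs, hs'] using (hv_pos s).le
      · simp [χ, hs, hs']
  have hzero := (sum_eq_zero_iff_of_nonneg hnonneg).1 (hv.sum_sub_mul_eq_zero χ) t (mem_univ t)
  simp only [χ, ht, hpre, if_true, if_false, sub_zero, one_mul] at hzero
  exact (hv_pos t).ne' hzero

theorem IsCirculation.reflTransGen_of_reflTransGen_symm [PartialOrder K] [IsOrderedRing K]
    (hv : IsCirculation pre post v)
    (hv_pos : ∀ t, 0 < v t) {a b : α}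
    (hab : ReflTransGen (fun x y => (∃ t, x = pre t ∧ y = post t) ∨ ∃ t, y = pre t ∧ x = post t)
      a b) :
    ReflTransGen (fun x y => ∃ t, x = pre t ∧ y = post t) a b := by
  induction hab with
  | refl => exact .refl
  | tail _ hxy ih =>
    rcases hxy with ⟨t, rfl, rfl⟩ | ⟨t, rfl, rfl⟩
    · exact ih.tail ⟨t, rfl, rfl⟩
    · exact hv.pre_mem_of_post_mem hv_pos (S := {x | ReflTransGen _ a x})
        (fun t h => h.tail ⟨t, rfl, rfl⟩) ih

end Circulation

section PetriNet

variable {P T : Type*} {Wm Wp : P → T → ℕ}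

inductive FiringSeq (Wm Wp : P → T → ℕ) : (P → ℕ) → List T → (P → ℕ) → Prop
  | nil (m : P → ℕ) : FiringSeq Wm Wp m [] m
  | cons {m m' : P → ℕ} {t : T} {l : List T} :
      enabledAt Wm m t → FiringSeq Wm Wp (fireAt Wm Wp m t) l m' → FiringSeq Wm Wp m (t :: l) m'

namespace FiringSeq

theorem append {m m' m'' : P → ℕ} {l l' : List T} (h : FiringSeq Wm Wp m l m')
    (h' : FiringSeq Wm Wp m' l' m'') : FiringSeq Wm Wp m (l ++ l') m'' := by
  induction h with
  | nil => exact h'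
  | cons ht _ ih => exact .cons ht (ih h')

theorem reach {m m' : P → ℕ} {l : List T} (h : FiringSeq Wm Wp m l m') : reach Wm Wp m m' := by
  induction h with
  | nil => exact .refl
  | cons ht _ ih => exact .head ⟨_, ht, rfl⟩ ih

/-- The state equation, with both sides moved so that no subtraction occurs. -/
theorem add_sum_map_pre {m m' : P → ℕ} {l : List T} (h : FiringSeq Wm Wp m l m') (p : P) :
    m' p + (l.map (Wm p)).sum = m p + (l.map (Wp p)).sum := by
  induction h with
  | nil => rfl
  | @cons m _ t _ ht _ ih =>
    have hfire : fireAt Wm Wp m t p + Wm p t = m p + Wp p t := by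
      have := ht p
      simp only [fireAt]
      omega
    simp only [List.map_cons, List.sum_cons]
    omega

end FiringSeq

theorem exists_firingSeq_of_reach {m m' : P → ℕ} (h : reach Wm Wp m m') :
    ∃ l, FiringSeq Wm Wp m l m' := by
  induction h with
  | refl => exact ⟨[], .nil _⟩
  | tail _ hstep ih =>
    obtain ⟨l, hl⟩ := ih
    obtain ⟨t, ht, rfl⟩ := hstep
    exact ⟨l ++ [t], hl.append (.cons ht (.nil _))⟩

variable {m0 : P → ℕ}

theorem exists_firingSeq_subset_of_live
    (hlive : ∀ m, reach Wm Wp m0 m → ∀ t, ∃ m', reach Wm Wp m m' ∧ enabledAt Wm m' t)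
    (ts : List T) {m : P → ℕ} (hm : reach Wm Wp m0 m) :
    ∃ l m', FiringSeq Wm Wp m l m' ∧ ts ⊆ l := by
  induction ts generalizing m with
  | nil => exact ⟨[], m, .nil m, List.nil_subset _⟩
  | cons t ts ih =>
    obtain ⟨m₁, hm₁, ht⟩ := hlive m hm t
    obtain ⟨l₀, hl₀⟩ := exists_firingSeq_of_reach hm₁
    have hfire : FiringSeq Wm Wp m (l₀ ++ [t]) (fireAt Wm Wp m₁ t) :=
      hl₀.append (.cons ht (.nil _))
    obtain ⟨l₁, m₂, hl₁, hts⟩ := ih (hm.trans hfire.reach)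
    refine ⟨l₀ ++ [t] ++ l₁, m₂, hfire.append hl₁, ?_⟩
    simp only [List.cons_subset, List.mem_append, List.mem_singleton, true_or, or_true,
      List.subset_append_of_subset_right _ hts, and_true]

theorem exists_firingSeq_cycle_of_live_of_bounded [Fintype T]
    (hlive : ∀ m, reach Wm Wp m0 m → ∀ t, ∃ m', reach Wm Wp m m' ∧ enabledAt Wm m' t)
    (hbounded : {m | reach Wm Wp m0 m}.Finite) :
    ∃ m l, FiringSeq Wm Wp m l m ∧ ∀ t, t ∈ l := by
  let r : (P → ℕ) → (P → ℕ) → Prop := fun m m' => ∃ l, FiringSeq Wm Wp m l m' ∧ ∀ t, t ∈ l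
  have : IsTrans (P → ℕ) r := ⟨fun _ _ _ ⟨l, hl, hl_mem⟩ ⟨l', hl', _⟩ =>
    ⟨l ++ l', hl.append hl', fun t => List.mem_append_left _ (hl_mem t)⟩⟩
  obtain ⟨m, -, hm⟩ := hbounded.exists_transGen_self (r := r) ⟨m0, .refl⟩ fun m hm => by
    obtain ⟨l, m', hl, hsub⟩ := exists_firingSeq_subset_of_live hlive univ.toList hm
    exact ⟨m', hm.trans hl.reach, l, hl, fun t => hsub (mem_toList.2 (mem_univ t))⟩
  exact ⟨m, by rwa [transGen_eq_self] at hm⟩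

theorem exists_pos_tInvariant_of_live_of_bounded [Fintype T]
    (hlive : ∀ m, reach Wm Wp m0 m → ∀ t, ∃ m', reach Wm Wp m m' ∧ enabledAt Wm m' t)
    (hbounded : {m | reach Wm Wp m0 m}.Finite) :
    ∃ x : T → ℕ, (∀ t, 0 < x t) ∧ ∀ p, ∑ t, x t * Wm p t = ∑ t, x t * Wp p t := by
  classical
  obtain ⟨m, l, hl, hl_mem⟩ := exists_firingSeq_cycle_of_live_of_bounded hlive hbounded
  refine ⟨fun t => l.count t, fun t => List.count_pos_iff.2 (hl_mem t), fun p => ?_⟩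
  have := hl.add_sum_map_pre p
  simp only [Fintype.sum_list_map_count, smul_eq_mul] at this
  exact Nat.add_left_cancel this

end PetriNet

theorem isCirculation_of_deficiencyZero {P T : Type*} [Fintype P] [Fintype T] [DecidableEq P]
    {Wm Wp : P → T → ℕ} (hdef : deficiencyZero Wm Wp) {x : T → ℕ}
    (hx : ∀ p, ∑ t, x t * Wm p t = ∑ t, x t * Wp p t) :
    IsCirculation (preBag Wm) (postBag Wp) fun t => (x t : ℚ) := by
  intro c hc
  obtain ⟨w, hw⟩ := hdef c hc
  have hWx : ∀ p, ∑ t, (x t : ℚ) * ((Wp p t : ℚ) - Wm p t) = 0 := fun p => by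
    simp only [mul_sub, sum_sub_distrib, sub_eq_zero]
    exact_mod_cast (hx p).symm
  calc ∑ t, Aentry Wm Wp c t * x t
      = ∑ t, (∑ p, w p * ((Wp p t : ℚ) - Wm p t)) * x t := by simp only [hw]
    _ = ∑ p, w p * ∑ t, (x t : ℚ) * ((Wp p t : ℚ) - Wm p t) := by
      simp only [sum_mul, mul_sum]
      rw [sum_comm]
      exact sum_congr rfl fun p _ => sum_congr rfl fun t _ => by ring
    _ = 0 := sum_eq_zero fun p _ => by rw [hWx p, mul_zero]

theorem stmt4_general {P T : Type*} [Fintype P] [Fintype T] [DecidableEq P]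
    (Wm Wp : P → T → ℕ) (m0 : P → ℕ)
    (hlive : ∀ m, reach Wm Wp m0 m → ∀ t, ∃ m', reach Wm Wp m m' ∧ enabledAt Wm m' t)
    (hbounded : {m | reach Wm Wp m0 m}.Finite)
    (hdef : deficiencyZero Wm Wp) :
    weaklyReversible Wm Wp := by
  obtain ⟨x, hx_pos, hx⟩ := exists_pos_tInvariant_of_live_of_bounded hlive hbounded
  intro c c' _ _ hcc'
  exact (isCirculation_of_deficiencyZero hdef hx).reflTransGen_of_reflTransGen_symm
    (fun t => Nat.cast_pos.2 (hx_pos t)) hcc'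

/-- A live and bounded Petri net of deficiency zero is weakly reversible. -/
theorem stmt4 {P T : Type*} [Fintype P] [Fintype T] [DecidableEq P] [DecidableEq T]
    (Wm Wp : P → T → ℕ) (m0 : P → ℕ)
    (hlive : ∀ m, reach Wm Wp m0 m → ∀ t, ∃ m', reach Wm Wp m m' ∧ enabledAt Wm m' t)
    (hbounded : {m | reach Wm Wp m0 m}.Finite)
    (hdef : deficiencyZero Wm Wp) :
    weaklyReversible Wm Wp :=
  stmt4_general Wm Wp m0 hlive hbounded hdef
end

section
/- Let N be a deficiency-zero Petri net. If there exists a marking m0 such that (N, m0) is live and m0 is a home marking, then N is weakly reversible. -/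
/-!
Liveness and the home-marking property put every transition `t` on a cycle of the reachability
graph: enable `t` from `m0`, fire it, and return to `m0`. By the marking equation the firing
counts of such a cycle form a T-invariant `σ` with `σ t > 0`; summing over all `t` gives a
strictly positive T-invariant `v`. Deficiency zero (`A = B W`) turns `W v = 0` into `A v = 0`,
i.e. flow conservation at every complex of the reaction graph. Summing this over the
complexes reachable from the target `b` of an arc `a → b` (a set no transition leaves), every
transition contributes a nonnegative amount, so no transition enters the set from outside;
as `a → b` ends in it, `a` lies in it too, i.e. `b` reaches `a`.
-/

section PetriNet

variable {P T : Type*} (Wm Wp : P → T → ℕ)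

def IsTInvariant [Fintype T] (v : T → ℚ) : Prop :=
  ∀ p, ∑ t, v t * ((Wp p t : ℚ) - Wm p t) = 0

variable {Wm Wp}

lemma cast_fireAt {m : P → ℕ} {t : T} (hen : enabledAt Wm m t) (p : P) :
    (fireAt Wm Wp m t p : ℚ) = m p + ((Wp p t : ℚ) - Wm p t) := by
  simp only [fireAt, Nat.cast_add, Nat.cast_sub (hen p)]
  ring

lemma sum_add_single_mul [Fintype T] [DecidableEq T] (σ : T → ℕ) (t : T) (d : T → ℚ) :
    ∑ s, ((σ + Pi.single t 1 : T → ℕ) s : ℚ) * d s = ∑ s, σ s * d s + d t := by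
  simp [add_mul, Finset.sum_add_distrib, Pi.single_apply]

lemma exists_marking_eq_of_reach [Fintype T] {m m' : P → ℕ} (h : reach Wm Wp m m') :
    ∃ σ : T → ℕ, ∀ p, (m' p : ℚ) = m p + ∑ t, σ t * ((Wp p t : ℚ) - Wm p t) := by
  classical
  induction h with
  | refl => exact ⟨0, by simp⟩
  | tail _ hstep ih =>
    obtain ⟨σ, hσ⟩ := ih
    obtain ⟨t, hen, rfl⟩ := hstep
    refine ⟨σ + Pi.single t 1, fun p => ?_⟩
    rw [cast_fireAt hen, sum_add_single_mul, hσ p]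
    ring

lemma exists_isTInvariant_of_live_of_home [Fintype T] (m0 : P → ℕ)
    (hlive : ∀ m, reach Wm Wp m0 m → ∀ t, ∃ m', reach Wm Wp m m' ∧ enabledAt Wm m' t)
    (hhome : ∀ m, reach Wm Wp m0 m → reach Wm Wp m m0) (t : T) :
    ∃ σ : T → ℕ, 0 < σ t ∧ IsTInvariant Wm Wp (fun s => (σ s : ℚ)) := by
  classical
  obtain ⟨m', hreach, hen⟩ := hlive m0 .refl t
  obtain ⟨σ, hσ⟩ :=
    exists_marking_eq_of_reach ((hhome _ (hreach.tail ⟨t, hen, rfl⟩)).trans hreach)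
  refine ⟨σ + Pi.single t 1, by simp, fun p => ?_⟩
  rw [sum_add_single_mul]
  linarith [hσ p, cast_fireAt (Wp := Wp) hen p]

lemma exists_pos_isTInvariant [Fintype T]
    (h : ∀ t, ∃ σ : T → ℕ, 0 < σ t ∧ IsTInvariant Wm Wp (fun s => (σ s : ℚ))) :
    ∃ v : T → ℚ, (∀ t, 0 < v t) ∧ IsTInvariant Wm Wp v := by
  choose σ hpos hσ using h
  refine ⟨fun s => ∑ t, (σ t s : ℚ), fun s => ?_, fun p => ?_⟩
  · exact Finset.sum_pos' (fun t _ => by positivity)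
      ⟨s, Finset.mem_univ s, by exact_mod_cast hpos s⟩
  · simp only [Finset.sum_mul]
    rw [Finset.sum_comm]
    exact Finset.sum_eq_zero fun t _ => hσ t p

lemma sum_Aentry_mul_eq_zero [Fintype P] [Fintype T] [DecidableEq P]
    (hdef : deficiencyZero Wm Wp) {v : T → ℚ} (hv : IsTInvariant Wm Wp v)
    {c : P → ℕ} (hc : c ∈ complexes Wm Wp) : ∑ t, Aentry Wm Wp c t * v t = 0 := by
  obtain ⟨w, hw⟩ := hdef c hc
  calc ∑ t, Aentry Wm Wp c t * v t
      = ∑ p, w p * ∑ t, v t * ((Wp p t : ℚ) - Wm p t) := by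
        simp only [← hw, Finset.sum_mul, Finset.mul_sum]
        rw [Finset.sum_comm]
        exact Finset.sum_congr rfl fun _ _ => Finset.sum_congr rfl fun _ _ => by ring
    _ = 0 := Finset.sum_eq_zero fun p _ => by rw [hv p, mul_zero]

lemma preBag_mem_of_postBag_mem [Fintype P] [Fintype T] [DecidableEq P] {v : T → ℚ}
    (hv : ∀ t, 0 < v t) {S : Finset (P → ℕ)}
    (hA : ∀ c ∈ S, ∑ t, Aentry Wm Wp c t * v t = 0)
    (hclosed : ∀ t, preBag Wm t ∈ S → postBag Wp t ∈ S) {t : T} (ht : postBag Wp t ∈ S) :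
    preBag Wm t ∈ S := by
  set flux : T → ℚ := fun s =>
    ((if postBag Wp s ∈ S then 1 else 0) - (if preBag Wm s ∈ S then 1 else 0)) * v s
  have hflux_sum : ∑ s, flux s = 0 := by
    rw [← Finset.sum_eq_zero hA, Finset.sum_comm]
    refine Finset.sum_congr rfl fun s _ => ?_
    simp only [flux, Aentry, ← Finset.sum_mul, Finset.sum_sub_distrib, Finset.sum_ite_eq]
  have hflux_nonneg : ∀ s ∈ Finset.univ, 0 ≤ flux s := fun s _ => by
    by_cases hpre : preBag Wm s ∈ S
    · simp [flux, hpre, hclosed s hpre]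
    · have := (hv s).le
      by_cases hpost : postBag Wp s ∈ S <;> simp [flux, hpre, hpost, this]
  have hflux_t := (Finset.sum_eq_zero_iff_of_nonneg hflux_nonneg).mp hflux_sum t
    (Finset.mem_univ t)
  by_contra hpre
  simp [flux, ht, hpre, (hv t).ne'] at hflux_t

lemma rarc_reverse_of_pos [Fintype P] [Fintype T] [DecidableEq P] {v : T → ℚ}
    (hv : ∀ t, 0 < v t)
    (hA : ∀ c ∈ complexes Wm Wp, ∑ t, Aentry Wm Wp c t * v t = 0)
    {a b : P → ℕ} (hab : rarc Wm Wp a b) : Relation.ReflTransGen (rarc Wm Wp) b a := by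
  classical
  obtain ⟨t, rfl, rfl⟩ := hab
  let S := (complexes Wm Wp).filter (Relation.ReflTransGen (rarc Wm Wp) (postBag Wp t))
  have hpost_mem : ∀ s, postBag Wp s ∈ complexes Wm Wp := fun s => by
    simp [complexes]
  have hpre : preBag Wm t ∈ S := by
    refine preBag_mem_of_postBag_mem hv (fun c hc => hA c (Finset.mem_filter.mp hc).1)
      (fun s hs => Finset.mem_filter.mpr ⟨hpost_mem s, ?_⟩)
      (Finset.mem_filter.mpr ⟨hpost_mem t, .refl⟩)
    exact (Finset.mem_filter.mp hs).2.tail ⟨s, rfl, rfl⟩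
  exact (Finset.mem_filter.mp hpre).2

lemma weaklyReversible_of_rarc_reverse
    (h : ∀ a b, rarc Wm Wp a b → Relation.ReflTransGen (rarc Wm Wp) b a) :
    weaklyReversible Wm Wp := by
  rintro c c' - - hconn
  induction hconn with
  | refl => exact .refl
  | tail _ hbc ih => exact hbc.elim ih.tail fun hcb => ih.trans (h _ _ hcb)

end PetriNet

theorem stmt5_general {P T : Type*} [Fintype P] [Fintype T] [DecidableEq P]
    (Wm Wp : P → T → ℕ) (hdef : deficiencyZero Wm Wp)
    (hex : ∃ m0 : P → ℕ,
      (∀ m, reach Wm Wp m0 m → ∀ t, ∃ m', reach Wm Wp m m' ∧ enabledAt Wm m' t) ∧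
      (∀ m, reach Wm Wp m0 m → reach Wm Wp m m0)) :
    weaklyReversible Wm Wp := by
  obtain ⟨m0, hlive, hhome⟩ := hex
  obtain ⟨v, hpos, hv⟩ :=
    exists_pos_isTInvariant (exists_isTInvariant_of_live_of_home m0 hlive hhome)
  exact weaklyReversible_of_rarc_reverse fun _ _ =>
    rarc_reverse_of_pos hpos fun _ hc => sum_Aentry_mul_eq_zero hdef hv hc

/-- If a deficiency-zero Petri net has a marking `m0` which is live and a home
marking, then the net is weakly reversible. -/
theorem stmt5 {P T : Type*} [Fintype P] [Fintype T] [DecidableEq P] [DecidableEq T]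
    (Wm Wp : P → T → ℕ) (hdef : deficiencyZero Wm Wp)
    (hex : ∃ m0 : P → ℕ,
      (∀ m, reach Wm Wp m0 m → ∀ t, ∃ m', reach Wm Wp m m' ∧ enabledAt Wm m' t) ∧
      (∀ m, reach Wm Wp m0 m → reach Wm Wp m m0)) :
    weaklyReversible Wm Wp :=
  stmt5_general Wm Wp hdef hex
end

section
/- In the k-bit counter Petri net, define the value val(m) = ∑_{i=0}^{k−1} 2^i · m(q_i) of a reachable marking m. Then firing transition t_i increases val by 1 and firing t_i⁻ decreases val by 1; consequently every reachable marking encodes an integer in [0, 2^k − 1] and the firing sequence σ_k defined by σ_1 = t_0, σ_{i+1} = σ_i t_i σ_i leads from the marking encoding 0 to the marking encoding 2^k − 1, with |σ_k| = 2^k − 1. -/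
/-- Pre-matrix of the `k`-bit counter net: places `inl j = p_j`, `inr j = q_j`;
transitions `inl i = t_i`, `inr i = t_i⁻`.  Here `•t_i = p_i + ∑_{j<i} q_j`. -/
def cWm (k : ℕ) : (Fin k ⊕ Fin k) → (Fin k ⊕ Fin k) → ℕ
  | Sum.inl j, Sum.inl i => if j = i then 1 else 0
  | Sum.inr j, Sum.inl i => if (j : ℕ) < (i : ℕ) then 1 else 0
  | Sum.inl j, Sum.inr i => if (j : ℕ) < (i : ℕ) then 1 else 0
  | Sum.inr j, Sum.inr i => if j = i then 1 else 0

/-- Post-matrix of the `k`-bit counter net: `t_i• = q_i + ∑_{j<i} p_j`, and the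
reverse transitions swap input and output bags. -/
def cWp (k : ℕ) (x : Fin k ⊕ Fin k) : (Fin k ⊕ Fin k) → ℕ
  | Sum.inl i => cWm k x (Sum.inr i)
  | Sum.inr i => cWm k x (Sum.inl i)

/-- Initial marking of the counter: each `p_i` marked, each `q_i` empty. -/
def cm0 (k : ℕ) : (Fin k ⊕ Fin k) → ℕ
  | Sum.inl _ => 1
  | Sum.inr _ => 0


/-- The value encoded by a marking: `val(m) = ∑ 2^i · m(q_i)`. -/
def cval (k : ℕ) (m : (Fin k ⊕ Fin k) → ℕ) : ℕ :=
  ∑ i : Fin k, 2 ^ (i : ℕ) * m (Sum.inr i)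

/-- The marking encoding `2^k − 1`: every `q_i` marked, every `p_i` empty. -/
def ctop (k : ℕ) : (Fin k ⊕ Fin k) → ℕ
  | Sum.inl _ => 0
  | Sum.inr _ => 1

/-- Firing a whole sequence of transitions. -/
def fires {P T : Type*} (Wm Wp : P → T → ℕ) : (P → ℕ) → List T → (P → ℕ) → Prop
  | m, [], m' => m' = m
  | m, t :: ts, m' => enabledAt Wm m t ∧ fires Wm Wp (fireAt Wm Wp m t) ts m'

/-- The firing sequence `σ_i`: `σ_1 = t_0`, `σ_{i+1} = σ_i t_i σ_i`. -/
def sigmaSeq (k : ℕ) : ℕ → List (Fin k ⊕ Fin k)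
  | 0 => []
  | i + 1 => sigmaSeq k i ++ (if h : i < k then [Sum.inl ⟨i, h⟩] else []) ++ sigmaSeq k i

/-!
Each transition moves one token inside every pair `{p_j, q_j}` or leaves the pair alone, so
`m(p_j) + m(q_j) = 1` is invariant and reachable markings are binary words of length `k`.
On `val`, firing `t_i` removes `∑_{j<i} 2^j = 2^i - 1` and adds `2^i`; `t_i⁻` does the
converse. Finally `σ_i`, fired from a word whose low `i` bits are `0`, sets them to `1`:
the first `σ_i` fills bits `0, …, i-1`, `t_i` carries them into bit `i`, and the second `σ_i`
fills them again.
-/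

open Finset

section PetriNet

variable {P T : Type*} (Wm Wp : P → T → ℕ)

theorem fires_append {m m' m'' : P → ℕ} {l₁ l₂ : List T} (h₁ : fires Wm Wp m l₁ m')
    (h₂ : fires Wm Wp m' l₂ m'') : fires Wm Wp m (l₁ ++ l₂) m'' := by
  induction l₁ generalizing m with
  | nil =>
    obtain rfl : m' = m := h₁
    exact h₂
  | cons t ts ih => exact ⟨h₁.1, ih h₁.2⟩

theorem fireAt_add_fireAt {m : P → ℕ} {t : T} (hen : enabledAt Wm m t) {p q : P}
    (hpq : Wm p t + Wm q t = Wp p t + Wp q t) :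
    fireAt Wm Wp m t p + fireAt Wm Wp m t q = m p + m q := by
  have := hen p
  have := hen q
  simp only [fireAt]
  omega

end PetriNet

theorem sum_mul_tsub_add {ι : Type*} (s : Finset ι) (w x a b : ι → ℕ)
    (h : ∀ j ∈ s, a j ≤ x j) :
    ∑ j ∈ s, w j * (x j - a j + b j) + ∑ j ∈ s, w j * a j =
      ∑ j ∈ s, w j * x j + ∑ j ∈ s, w j * b j := by
  rw [← sum_add_distrib, ← sum_add_distrib]
  refine sum_congr rfl fun j hj => ?_
  have := h j hj
  rw [← mul_add, ← mul_add]
  congr 1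
  omega

theorem sum_fin_two_pow_lt {k i : ℕ} (hi : i ≤ k) :
    ∑ j : Fin k, 2 ^ (j : ℕ) * (if (j : ℕ) < i then 1 else 0) = 2 ^ i - 1 := by
  have hlow : ∑ j ∈ range i, 2 ^ j * (if j < i then 1 else 0) = ∑ j ∈ range i, 2 ^ j :=
    sum_congr rfl fun j hj => by rw [if_pos (mem_range.1 hj), mul_one]
  have hhigh : ∑ j ∈ Ico i k, 2 ^ j * (if j < i then 1 else 0) = 0 :=
    sum_eq_zero fun j hj => by rw [if_neg (mem_Ico.1 hj).1.not_gt, mul_zero]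
  rw [Fin.sum_univ_eq_sum_range (fun j => 2 ^ j * if j < i then 1 else 0),
    ← sum_range_add_sum_Ico _ hi, hlow, hhigh, add_zero, Nat.geomSum_eq le_rfl, Nat.div_one]

section Counter

variable {k : ℕ}

theorem cval_fireAt_add {m : Fin k ⊕ Fin k → ℕ} {t : Fin k ⊕ Fin k}
    (hen : enabledAt (cWm k) m t) :
    cval k (fireAt (cWm k) (cWp k) m t) + ∑ j : Fin k, 2 ^ (j : ℕ) * cWm k (.inr j) t =
      cval k m + ∑ j : Fin k, 2 ^ (j : ℕ) * cWp k (.inr j) t :=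
  sum_mul_tsub_add _ _ _ _ _ fun j _ => hen (.inr j)

theorem sum_two_pow_mul_cWm_inl (i : Fin k) :
    ∑ j : Fin k, 2 ^ (j : ℕ) * cWm k (.inr j) (.inl i) = 2 ^ (i : ℕ) - 1 :=
  sum_fin_two_pow_lt i.isLt.le

theorem sum_two_pow_mul_cWm_inr (i : Fin k) :
    ∑ j : Fin k, 2 ^ (j : ℕ) * cWm k (.inr j) (.inr i) = 2 ^ (i : ℕ) := by
  simp [cWm]

theorem cval_fireAt_inl {m : Fin k ⊕ Fin k → ℕ} {i : Fin k}
    (hen : enabledAt (cWm k) m (.inl i)) :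
    cval k (fireAt (cWm k) (cWp k) m (.inl i)) = cval k m + 1 := by
  have h := cval_fireAt_add hen
  simp only [cWp] at h
  rw [sum_two_pow_mul_cWm_inl, sum_two_pow_mul_cWm_inr] at h
  have := (i : ℕ).one_le_two_pow
  omega

theorem cval_fireAt_inr {m : Fin k ⊕ Fin k → ℕ} {i : Fin k}
    (hen : enabledAt (cWm k) m (.inr i)) :
    cval k (fireAt (cWm k) (cWp k) m (.inr i)) + 1 = cval k m := by
  have h := cval_fireAt_add hen
  simp only [cWp] at h
  rw [sum_two_pow_mul_cWm_inr, sum_two_pow_mul_cWm_inl] at h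
  have := (i : ℕ).one_le_two_pow
  omega

def IsBinaryMarking (k : ℕ) (m : Fin k ⊕ Fin k → ℕ) : Prop :=
  ∀ j : Fin k, m (.inl j) + m (.inr j) = 1

theorem cWm_add_cWm_eq_cWp_add_cWp (j : Fin k) (t : Fin k ⊕ Fin k) :
    cWm k (.inl j) t + cWm k (.inr j) t = cWp k (.inl j) t + cWp k (.inr j) t := by
  cases t <;> simp only [cWm, cWp] <;> omega

theorem IsBinaryMarking.step {m m' : Fin k ⊕ Fin k → ℕ} (hm : IsBinaryMarking k m)
    (h : step (cWm k) (cWp k) m m') : IsBinaryMarking k m' := by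
  obtain ⟨t, hen, rfl⟩ := h
  intro j
  rw [fireAt_add_fireAt _ _ hen (cWm_add_cWm_eq_cWp_add_cWp j t), hm j]

theorem isBinaryMarking_of_reach {m : Fin k ⊕ Fin k → ℕ}
    (h : reach (cWm k) (cWp k) (cm0 k) m) : IsBinaryMarking k m := by
  induction h with
  | refl => exact fun _ => rfl
  | tail _ hstep ih => exact ih.step hstep

theorem IsBinaryMarking.cval_lt {m : Fin k ⊕ Fin k → ℕ} (hm : IsBinaryMarking k m) :
    cval k m < 2 ^ k := by
  have hle : cval k m ≤ ∑ j : Fin k, 2 ^ (j : ℕ) * 1 :=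
    sum_le_sum fun j _ => Nat.mul_le_mul_left _ (by have := hm j; omega)
  have hsum := sum_fin_two_pow_lt (k := k) le_rfl
  simp only [Fin.is_lt, if_true] at hsum
  have := k.one_le_two_pow
  omega

def bitMarking (k : ℕ) (b : Fin k → Bool) : Fin k ⊕ Fin k → ℕ :=
  Sum.elim (fun j => if b j then 0 else 1) (fun j => if b j then 1 else 0)

def fillLow (i : ℕ) (b : Fin k → Bool) : Fin k → Bool :=
  fun j => if (j : ℕ) < i then true else b j

def carryInto (i : ℕ) (b : Fin k → Bool) : Fin k → Bool :=
  fun j => if (j : ℕ) < i then false else if (j : ℕ) = i then true else b j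

theorem enabledAt_bitMarking_inl {b : Fin k → Bool} {i : Fin k}
    (hlow : ∀ j : Fin k, (j : ℕ) < i → b j = true) (hi : b i = false) :
    enabledAt (cWm k) (bitMarking k b) (.inl i) := by
  rintro (j | j)
  · by_cases hj : j = i
    · simp [cWm, bitMarking, hj, hi]
    · simp [cWm, bitMarking, hj]
  · by_cases hj : (j : ℕ) < i
    · simp [cWm, bitMarking, hj, hlow j hj]
    · simp [cWm, bitMarking, hj]

theorem fireAt_bitMarking_inl {b : Fin k → Bool} {i : Fin k}
    (hlow : ∀ j : Fin k, (j : ℕ) < i → b j = true) (hi : b i = false) :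
    fireAt (cWm k) (cWp k) (bitMarking k b) (.inl i) = bitMarking k (carryInto i b) := by
  funext p
  cases p with
  | inl j | inr j =>
    rcases lt_trichotomy (j : ℕ) i with hj | hj | hj
    · simp [fireAt, cWm, cWp, bitMarking, carryInto, hj, hlow j hj,
        (show j < i from hj).ne, (show j < i from hj).not_ge]
    · obtain rfl := Fin.ext hj
      simp [fireAt, cWm, cWp, bitMarking, carryInto, hi]
    · simp [fireAt, cWm, cWp, bitMarking, carryInto, hj.not_gt, hj.ne', (show i < j from hj).le,
        (show i < j from hj).ne']

theorem fires_bitMarking_inl {b : Fin k → Bool} {i : Fin k}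
    (hlow : ∀ j : Fin k, (j : ℕ) < i → b j = true) (hi : b i = false) :
    fires (cWm k) (cWp k) (bitMarking k b) [.inl i] (bitMarking k (carryInto i b)) :=
  ⟨enabledAt_bitMarking_inl hlow hi, (fireAt_bitMarking_inl hlow hi).symm⟩

theorem fires_sigmaSeq {i : ℕ} (hi : i ≤ k) {b : Fin k → Bool}
    (hlow : ∀ j : Fin k, (j : ℕ) < i → b j = false) :
    fires (cWm k) (cWp k) (bitMarking k b) (sigmaSeq k i) (bitMarking k (fillLow i b)) := by
  induction i generalizing b with
  | zero =>
    have : fillLow 0 b = b := funext fun j => by simp [fillLow]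
    rw [this]
    rfl
  | succ i ih =>
    have hik : i < k := hi
    let c := carryInto i (fillLow i b)
    have hfill : ∀ j : Fin k, (j : ℕ) < i → fillLow i b j = true := fun j hj => by
      simp [fillLow, hj]
    have hcarry : fillLow i c = fillLow (i + 1) b := by
      funext j
      simp only [fillLow, c, carryInto]
      split_ifs <;> first | rfl | omega
    have hbit : fillLow i b ⟨i, hik⟩ = false := by simp [fillLow, hlow ⟨i, hik⟩ i.lt_succ_self]
    have hfire := fires_bitMarking_inl hfill hbit
    rw [sigmaSeq, dif_pos hik, ← hcarry]
    refine fires_append _ _ (fires_append _ _ (ih hik.le fun j hj => hlow j (by omega)) hfire)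
      (ih hik.le fun j hj => ?_)
    simp [carryInto, hj]

theorem length_sigmaSeq {i : ℕ} (hi : i ≤ k) : (sigmaSeq k i).length = 2 ^ i - 1 := by
  induction i with
  | zero => rfl
  | succ i ih =>
    have hik : i < k := hi
    rw [sigmaSeq, dif_pos hik, List.length_append, List.length_append, ih hik.le,
      List.length_singleton, pow_succ]
    have := i.one_le_two_pow
    omega

end Counter

/-- Firing `t_i` increases `val` by 1 and firing `t_i⁻` decreases it by 1;
every reachable marking encodes an integer in `[0, 2^k − 1]`; and the sequence
`σ_k` of length `2^k − 1` leads from the marking encoding `0` to the marking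
encoding `2^k − 1`. -/
theorem stmt7 (k : ℕ) :
    (∀ (m : (Fin k ⊕ Fin k) → ℕ) (i : Fin k), enabledAt (cWm k) m (Sum.inl i) →
      cval k (fireAt (cWm k) (cWp k) m (Sum.inl i)) = cval k m + 1) ∧
    (∀ (m : (Fin k ⊕ Fin k) → ℕ) (i : Fin k), enabledAt (cWm k) m (Sum.inr i) →
      cval k (fireAt (cWm k) (cWp k) m (Sum.inr i)) + 1 = cval k m) ∧
    (∀ m, reach (cWm k) (cWp k) (cm0 k) m → cval k m < 2 ^ k) ∧
    fires (cWm k) (cWp k) (cm0 k) (sigmaSeq k k) (ctop k) ∧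
    (sigmaSeq k k).length = 2 ^ k - 1 := by
  refine ⟨fun _ _ => cval_fireAt_inl, fun _ _ => cval_fireAt_inr,
    fun _ h => (isBinaryMarking_of_reach h).cval_lt, ?_, length_sigmaSeq le_rfl⟩
  have hzero : cm0 k = bitMarking k fun _ => false := by
    funext p; cases p <;> rfl
  have htop : ctop k = bitMarking k (fillLow k fun _ => false) := by
    funext p; cases p <;> simp [ctop, bitMarking, fillLow]
  rw [hzero, htop]
  exact fires_sigmaSeq le_rfl fun _ _ => rfl
end

section
/- In the regulated Petri net A ⊙ N obtained by composing a Petri net N with its reaction Petri net, every complex has a witness; hence A ⊙ N has deficiency zero. Explicitly, for each complex c̃ of A ⊙ N corresponding to a complex c of N, the indicator vector of the place c (in the added copy of the complexes) is a witness of c̃. -/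
variable {P T : Type*} [Fintype P] [Fintype T] [DecidableEq P] [DecidableEq T]

/-- Pre-matrix of the regulated net `A ⊙ N`: the places of `N` together with
one new place per complex of `N` (the reaction Petri net is stacked on `N`). -/
def rWm (Wm Wp : P → T → ℕ) : (P ⊕ {c // c ∈ complexes Wm Wp}) → T → ℕ
  | Sum.inl p, t => Wm p t
  | Sum.inr c, t => if c.1 = preBag Wm t then 1 else 0

/-- Post-matrix of the regulated net `A ⊙ N`. -/
def rWp (Wm Wp : P → T → ℕ) : (P ⊕ {c // c ∈ complexes Wm Wp}) → T → ℕ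
  | Sum.inl p, t => Wp p t
  | Sum.inr c, t => if c.1 = postBag Wp t then 1 else 0

/-- The complex `c̃` of `A ⊙ N` corresponding to a complex `c` of `N`. -/
def ctilde (Wm Wp : P → T → ℕ) (c : {c // c ∈ complexes Wm Wp}) :
    (P ⊕ {c // c ∈ complexes Wm Wp}) → ℕ
  | Sum.inl p => c.1 p
  | Sum.inr d => if d = c then 1 else 0

section

omit [DecidableEq T]

lemma preBag_rWm_eq_ctilde_iff (Wm Wp : P → T → ℕ) (c : {c // c ∈ complexes Wm Wp}) (t : T) :
    preBag (rWm Wm Wp) t = ctilde Wm Wp c ↔ c.1 = preBag Wm t := by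
  refine ⟨fun h => funext fun p => (congrFun h (Sum.inl p)).symm, fun h => ?_⟩
  funext x
  cases x with
  | inl p => exact (congrFun h p).symm
  | inr d => simp only [preBag, rWm, ctilde, ← h, ← Subtype.ext_iff]

lemma postBag_rWp_eq_ctilde_iff (Wm Wp : P → T → ℕ) (c : {c // c ∈ complexes Wm Wp}) (t : T) :
    postBag (rWp Wm Wp) t = ctilde Wm Wp c ↔ c.1 = postBag Wp t := by
  refine ⟨fun h => funext fun p => (congrFun h (Sum.inl p)).symm, fun h => ?_⟩
  funext x
  cases x with
  | inl p => exact (congrFun h p).symm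
  | inr d => simp only [postBag, rWp, ctilde, ← h, ← Subtype.ext_iff]

lemma rWp_inr_sub_rWm_inr (Wm Wp : P → T → ℕ) (c : {c // c ∈ complexes Wm Wp}) (t : T) :
    ((rWp Wm Wp (Sum.inr c) t : ℚ) - (rWm Wm Wp (Sum.inr c) t : ℚ)) =
      (if postBag (rWp Wm Wp) t = ctilde Wm Wp c then 1 else 0) -
        (if preBag (rWm Wm Wp) t = ctilde Wm Wp c then 1 else 0) := by
  simp only [rWp, rWm, postBag_rWp_eq_ctilde_iff, preBag_rWm_eq_ctilde_iff]
  push_cast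
  rfl

end

/-- In the regulated net `A ⊙ N` every complex `c̃` has a witness, namely the
indicator vector of the added place `q_c`; hence `A ⊙ N` has deficiency zero. -/
theorem stmt9 (Wm Wp : P → T → ℕ) :
    (∀ (c : {c // c ∈ complexes Wm Wp}) (t : T),
      ∑ x : P ⊕ {c // c ∈ complexes Wm Wp},
          (if x = Sum.inr c then (1 : ℚ) else 0) *
            ((rWp Wm Wp x t : ℚ) - (rWm Wm Wp x t : ℚ)) =
        (if postBag (rWp Wm Wp) t = ctilde Wm Wp c then 1 else 0) -
          (if preBag (rWm Wm Wp) t = ctilde Wm Wp c then 1 else 0)) ∧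
    (∃ B : Matrix {c // c ∈ complexes Wm Wp} (P ⊕ {c // c ∈ complexes Wm Wp}) ℚ,
      ∀ (c : {c // c ∈ complexes Wm Wp}) (t : T),
        ((if postBag (rWp Wm Wp) t = ctilde Wm Wp c then 1 else 0) -
            (if preBag (rWm Wm Wp) t = ctilde Wm Wp c then 1 else 0) : ℚ) =
          ∑ x, B c x * ((rWp Wm Wp x t : ℚ) - (rWm Wm Wp x t : ℚ))) := by
  refine (fun witness => ⟨witness, fun c x => if x = Sum.inr c then 1 else 0,
    fun c t => (witness c t).symm⟩) fun c t => ?_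
  simp only [ite_mul, one_mul, zero_mul, Fintype.sum_ite_eq']
  exact rWp_inr_sub_rWm_inr Wm Wp c t
end
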